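/- arXiv:math/0407395 — 9 statements merged into one kernel-verified Lean document; each statement's English description precedes it below -/
import Mathlib

section
/- Let X be a real Banach space and Z = X ⊕ iX its complexification, equipped with a norm such that ‖x + iy‖ = ‖x − iy‖ for all x, y ∈ X. If f : Z^n → Z is a continuous complex n-linear map with f(X × ⋯ × X) ⊆ X, then the operator norm of f satisfies ‖f‖ ≤ 2^n · ‖f restricted to X × ⋯ × X‖. -/
/-- Let `Z = X ⊕ iX` be the complexification of a real Banach space `X`,
modeled as a complex normed space `Z` with a continuous conjugation `σ`
(an ℝ-linear involution, antilinear over ℂ, isometric: `‖x+iy‖ = ‖x−iy‖`),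
whose fixed-point set is `X`.  If `f : Zⁿ → Z` is a continuous complex `n`-linear
map with `f(X × ⋯ × X) ⊆ X` and `C` bounds `f` on `X × ⋯ × X`, then `‖f‖ ≤ 2ⁿ · C`. -/
theorem stmt_0 {Z : Type*} [NormedAddCommGroup Z] [NormedSpace ℂ Z]
    (σ : Z →ₗ[ℝ] Z)
    (hσ_invol : ∀ z, σ (σ z) = z)
    (hσ_antilinear : ∀ (c : ℂ) (z : Z), σ (c • z) = (starRingEnd ℂ c) • σ z)
    (hσ_isometric : ∀ z, ‖σ z‖ = ‖z‖)
    (n : ℕ)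
    (f : ContinuousMultilinearMap ℂ (fun _ : Fin n => Z) Z)
    (hfX : ∀ v : Fin n → Z, (∀ i, σ (v i) = v i) → σ (f v) = f v)
    (C : ℝ) (hC : 0 ≤ C)
    (hbound : ∀ v : Fin n → Z, (∀ i, σ (v i) = v i) →
      ‖f v‖ ≤ C * ∏ i, ‖v i‖) :
    ‖f‖ ≤ 2 ^ n * C := by
  classical
  refine f.opNorm_le_bound (by positivity) (fun v => ?_)
  set x : Fin n → Z := fun i => (1/2 : ℂ) • (v i + σ (v i)) with hx
  set y : Fin n → Z := fun i => (-(1/2) * Complex.I) • (v i - σ (v i)) with hy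
  have hconj1 : (starRingEnd ℂ) (1/2) = 1/2 := by simp [Complex.ext_iff]
  have hconj2 : (starRingEnd ℂ) (-(1/2) * Complex.I) = (1/2) * Complex.I := by
    simp [Complex.ext_iff]
  have hxfix : ∀ i, σ (x i) = x i := by
    intro i
    rw [hx, hσ_antilinear, hconj1, map_add, hσ_invol, add_comm]
  have hyfix : ∀ i, σ (y i) = y i := by
    intro i
    rw [hy, hσ_antilinear, hconj2, map_sub, hσ_invol,
      show σ (v i) - v i = -(v i - σ (v i)) from (neg_sub _ _).symm,
      smul_neg, ← neg_smul]
    ring_nf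
  have hvxy : ∀ i, x i + Complex.I • y i = v i := by
    intro i
    rw [hx, hy, smul_smul,
      show Complex.I * (-(1/2) * Complex.I) = 1/2 by
        rw [show Complex.I * (-(1/2) * Complex.I) = -(1/2) * (Complex.I * Complex.I) by ring,
          Complex.I_mul_I]; ring]
    module
  have hxnorm : ∀ i, ‖x i‖ ≤ ‖v i‖ := by
    intro i
    rw [hx, norm_smul]
    have h12 : ‖(1/2 : ℂ)‖ = 1/2 := by norm_num
    rw [h12]
    have := norm_add_le (v i) (σ (v i))
    rw [hσ_isometric] at this
    linarith
  have hynorm : ∀ i, ‖y i‖ ≤ ‖v i‖ := by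
    intro i
    rw [hy, norm_smul]
    have h12 : ‖(-(1/2) * Complex.I : ℂ)‖ = 1/2 := by
      rw [norm_mul, Complex.norm_I]; norm_num
    rw [h12]
    have := norm_sub_le (v i) (σ (v i))
    rw [hσ_isometric] at this
    linarith
  have key : f v = ∑ s : Finset (Fin n),
      (∏ i, if i ∈ s then (1:ℂ) else Complex.I) • f (s.piecewise x y) := by
    have hv : v = x + fun i => Complex.I • y i := by
      funext i; exact (hvxy i).symm
    rw [hv]
    have h1 : f.toMultilinearMap (x + fun i => Complex.I • y i)
        = ∑ s : Finset (Fin n), f.toMultilinearMap (s.piecewise x fun i => Complex.I • y i) :=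
      f.toMultilinearMap.map_add_univ x (fun i => Complex.I • y i)
    rw [show (f : (Fin n → Z) → Z) = f.toMultilinearMap from rfl] at *
    rw [h1]
    refine Finset.sum_congr rfl (fun s _ => ?_)
    have h2 : (s.piecewise x fun i => Complex.I • y i)
        = fun i => (if i ∈ s then (1:ℂ) else Complex.I) • (s.piecewise x y i) := by
      funext i
      by_cases hi : i ∈ s <;> simp [Finset.piecewise, hi]
    rw [h2, f.toMultilinearMap.map_smul_univ]
  have hterm : ∀ s : Finset (Fin n),
      ‖(∏ i, if i ∈ s then (1:ℂ) else Complex.I) • f (s.piecewise x y)‖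
        ≤ C * ∏ i, ‖v i‖ := by
    intro s
    rw [norm_smul]
    have hc : ‖∏ i, if i ∈ s then (1:ℂ) else Complex.I‖ = 1 := by
      rw [norm_prod]
      refine Finset.prod_eq_one (fun i _ => ?_)
      by_cases hi : i ∈ s <;> simp [hi]
    rw [hc, one_mul]
    have hfix : ∀ i, σ (s.piecewise x y i) = s.piecewise x y i := by
      intro i
      by_cases hi : i ∈ s <;> simp [Finset.piecewise, hi, hxfix i, hyfix i]
    refine (hbound _ hfix).trans ?_
    refine mul_le_mul_of_nonneg_left ?_ hC
    refine Finset.prod_le_prod (fun i _ => norm_nonneg _) (fun i _ => ?_)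
    by_cases hi : i ∈ s <;> simp [Finset.piecewise, hi, hxnorm i, hynorm i]
  calc ‖f v‖ = ‖∑ s : Finset (Fin n),
        (∏ i, if i ∈ s then (1:ℂ) else Complex.I) • f (s.piecewise x y)‖ := by rw [key]
    _ ≤ ∑ s : Finset (Fin n),
        ‖(∏ i, if i ∈ s then (1:ℂ) else Complex.I) • f (s.piecewise x y)‖ :=
      norm_sum_le _ _
    _ ≤ ∑ _s : Finset (Fin n), C * ∏ i, ‖v i‖ :=
      Finset.sum_le_sum (fun s _ => hterm s)
    _ = 2 ^ n * C * ∏ i, ‖v i‖ := by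
      rw [Finset.sum_const, Finset.card_univ, Fintype.card_finset, Fintype.card_fin,
        nsmul_eq_mul]
      push_cast
      ring
end

section
/- Let X be a real Banach space, Z = X_ℂ its complexification with conjugation fixing X, and J₀ ∈ B_ℂ(Z) with J₀² = −id_Z and J₀(X) ⊆ X. Then Z = ker(J₀ + i·id_Z) ⊕ X as real topological vector spaces: ker(J₀ + i·id_Z) ∩ X = {0} and ker(J₀ + i·id_Z) + X = Z. -/
/-- Let `Z = X_ℂ` be the complexification of a real Banach space `X`
(conjugation `σ` with fixed set `X`), and `J₀ ∈ B_ℂ(Z)` with `J₀² = −id_Z` and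
`J₀(X) ⊆ X` (i.e. `J₀` commutes with `σ`).  Then `Z = ker(J₀ + i·id_Z) ⊕ X` as real
vector spaces: `ker(J₀ + i·id_Z) ∩ X = {0}` and `ker(J₀ + i·id_Z) + X = Z`. -/
theorem stmt_8 {Z : Type*} [NormedAddCommGroup Z] [NormedSpace ℂ Z] [CompleteSpace Z]
    (σ : Z →ₗ[ℝ] Z)
    (hσ_cont : Continuous σ)
    (hσ_invol : ∀ z, σ (σ z) = z)
    (hσ_antilinear : ∀ (c : ℂ) (z : Z), σ (c • z) = (starRingEnd ℂ c) • σ z)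
    (J₀ : Z →L[ℂ] Z)
    (hJ2 : ∀ v : Z, J₀ (J₀ v) = -v)
    (hJσ : ∀ z : Z, σ (J₀ z) = J₀ (σ z)) :
    (∀ z : Z, J₀ z = -Complex.I • z → σ z = z → z = 0)
      ∧ (∀ z : Z, ∃ w x : Z, J₀ w = -Complex.I • w ∧ σ x = x ∧ z = w + x) := by
  constructor
  · intro z hz hσz
    have h1 : σ ((-Complex.I) • z) = (-Complex.I) • z := by rw [← hz, hJσ, hσz, hz]
    rw [hσ_antilinear, hσz, map_neg, Complex.conj_I, neg_neg] at h1
    have h2 : (Complex.I - (-Complex.I)) • z = 0 := by rw [sub_smul, h1, sub_self]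
    have h3 : (Complex.I - (-Complex.I)) ≠ 0 := by
      simp [Complex.ext_iff]
    rcases smul_eq_zero.mp h2 with h | h
    · exact absurd h h3
    · exact h
  · intro z
    -- `a` is `z₊` and `b` is `z₋` from the informal proof
    set a : Z := ((1:ℂ)/2) • z - (Complex.I/2) • J₀ z with ha
    set b : Z := -(Complex.I/2) • J₀ z - ((1:ℂ)/2) • z with hb
    have haJ : J₀ a = Complex.I • a := by
      rw [ha]; rw [map_sub, map_smul, map_smul, hJ2]
      match_scalars <;> ring_nf <;> simp [Complex.I_sq] <;> ring
    have hbJ : J₀ b = -Complex.I • b := by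
      rw [hb]; rw [map_sub, map_smul, map_smul, hJ2]
      match_scalars <;> ring_nf <;> simp [Complex.I_sq] <;> ring
    have hσaJ : J₀ (σ a) = -Complex.I • σ a := by
      rw [← hJσ, haJ, hσ_antilinear, Complex.conj_I, neg_smul, ← neg_smul]
    refine ⟨-b - σ a, a + σ a, ?_, ?_, ?_⟩
    · rw [map_sub, map_neg, hbJ, hσaJ]
      module
    · rw [map_add, hσ_invol]
      abel
    · rw [ha, hb]; module
end

section
/- Let g be a real Banach-Lie algebra, h a closed subalgebra, I : g → g a bounded linear map with h ⊆ ker I, and let V be a closed complement of h with I(V) ⊆ V and (I|_V)² = −id_V; let π : g → g/h be the quotient map and assume π(I[z, v]) = π([z, Iv]) for all z ∈ h, v ∈ V. If I[Ix, y] + I[x, Iy] + [x, y] − [Ix, Iy] ∈ h for all x, y ∈ V, then also I[Ix, y] + I[x, Iy] + [x, y] − [Ix, Iy] ∈ h for all x ∈ h, y ∈ V; consequently the condition 'I[Ix,y] + I[x,Iy] + [x,y] − [Ix,Iy] ∈ h for all x, y ∈ g' is equivalent to the same condition for x, y ∈ V only. -/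
/-- Let `g` be a real Banach-Lie algebra (continuous bracket `lb`),
`h` a closed subalgebra, `V` a closed complement (`g = h ⊕ V`), and `I ∈ B(g)` with
`h ⊆ ker I`, `I(V) ⊆ V`, `(I|_V)² = −id_V`, together with the infinitesimal
equivariance `π(I[z,v]) = π([z,Iv])` for `z ∈ h`, `v ∈ V` (i.e. `I[z,v] − [z,Iv] ∈ h`).
With `N(x,y) := I[Ix,y] + I[x,Iy] + [x,y] − [Ix,Iy]`, the condition `N(x,y) ∈ h` for
all `x, y ∈ g` is equivalent to the same condition for `x, y ∈ V` only. -/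
theorem stmt_11 {g : Type*} [NormedAddCommGroup g] [NormedSpace ℝ g] [CompleteSpace g]
    (lb : g →L[ℝ] g →L[ℝ] g)
    (hlb_skew : ∀ x y : g, lb x y = -lb y x)
    (hlb_jacobi : ∀ x y z : g, lb x (lb y z) + lb y (lb z x) + lb z (lb x y) = 0)
    (h V : Submodule ℝ g)
    (hh_closed : IsClosed (h : Set g)) (hV_closed : IsClosed (V : Set g))
    (hh_subalg : ∀ x ∈ h, ∀ y ∈ h, lb x y ∈ h)
    (hcompl : IsCompl h V)
    (I : g →L[ℝ] g)
    (hIh : ∀ x ∈ h, I x = 0)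
    (hIV : ∀ x ∈ V, I x ∈ V)
    (hI2 : ∀ x ∈ V, I (I x) = -x)
    (hequiv : ∀ z ∈ h, ∀ v ∈ V, I (lb z v) - lb z (I v) ∈ h) :
    ((∀ x y : g, I (lb (I x) y) + I (lb x (I y)) + lb x y - lb (I x) (I y) ∈ h)
      ↔ (∀ x ∈ V, ∀ y ∈ V,
          I (lb (I x) y) + I (lb x (I y)) + lb x y - lb (I x) (I y) ∈ h)) := by
  constructor
  · intro H x _ y _
    exact H x y
  · intro H x y
    set N : g → g → g := fun x y => I (lb (I x) y) + I (lb x (I y)) + lb x y - lb (I x) (I y)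
      with hN
    -- decompose x and y
    obtain ⟨a, ha, b, hb, rfl⟩ :=
      Submodule.mem_sup.mp (show x ∈ h ⊔ V by rw [hcompl.sup_eq_top]; trivial)
    obtain ⟨c, hc, d, hd, rfl⟩ :=
      Submodule.mem_sup.mp (show y ∈ h ⊔ V by rw [hcompl.sup_eq_top]; trivial)
    have hsum : N (a + b) (c + d) = N a c + N a d + N b c + N b d := by
      simp only [hN, map_add, ContinuousLinearMap.add_apply]
      abel
    -- case h,h
    have h1 : N a c ∈ h := by
      have : N a c = lb a c := by
        simp [hN, hIh a ha, hIh c hc]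
      rw [this]; exact hh_subalg a ha c hc
    -- case h,V
    have h2 : N a d ∈ h := by
      have key := hequiv a ha (I d) (hIV d hd)
      rw [hI2 d hd, map_neg] at key
      rw [sub_neg_eq_add] at key
      have : N a d = I (lb a (I d)) + lb a d := by
        simp [hN, hIh a ha]
      rw [this]; exact key
    -- case V,h
    have h3 : N b c ∈ h := by
      have key := hequiv c hc (I b) (hIV b hb)
      rw [hI2 b hb, map_neg] at key
      rw [sub_neg_eq_add] at key
      have : N b c = -(I (lb c (I b)) + lb c b) := by
        simp only [hN, hIh c hc, map_zero, ContinuousLinearMap.zero_apply,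
          ContinuousLinearMap.map_zero, map_neg]
        rw [hlb_skew (I b) c, hlb_skew b c]
        simp
        abel
      rw [this]; exact neg_mem key
    -- case V,V
    have h4 : N b d ∈ h := H b hb d hd
    show N (a + b) (c + d) ∈ h
    rw [hsum]
    exact add_mem (add_mem (add_mem h1 h2) h3) h4
end

section
/- Let g be a real Banach-Lie algebra, h a closed subalgebra, V a closed complement (g = h ⊕ V), and I ∈ B(g) with h = ker I, I(V) ⊆ V, (I|_V)² = −id_V, and N(x,y) := I[Ix,y] + I[x,Iy] + [x,y] − [Ix,Iy] ∈ h for all x, y ∈ g. Extend I complex-linearly to g_ℂ and set k := h_ℂ + ker(I − i·id) ∩ V_ℂ. Then k is a closed complex subalgebra of g_ℂ satisfying k + k̄ = g_ℂ and k ∩ k̄ = h_ℂ, where k̄ denotes the image of k under the conjugation of g_ℂ fixing g. -/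
/-!
Write `k = ker I ⊔ (ker (I - i) ⊓ V)`. As `V` is `I`-invariant and meets `ker I` trivially,
`k = ker (I ∘ (I - i))`, so `k` is closed and membership in `k` is the identity `I (I z) = i I z`.
For brackets: `[h, h] ⊆ h`, the equivariance condition handles `[h, k]`, and for
`i`-eigenvectors `u, w` one has `N(u, w) = 2i I[u, w] + 2[u, w]`; here `N` takes values in
`ker I` at all complex points because it is complex bilinear and does so at real points.
Splitting `V` into the `±i`-eigenspaces of `I`, which `σ` exchanges, gives `k + σ k = g_ℂ`.
Finally, if `z` and `σ z` lie in `k`, conjugating `I² (σ z) = i I (σ z)` gives `I² z = -i I z`,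
hence `I z = 0`.
-/

open LinearMap Submodule

namespace LinearMap

variable {R M : Type*} [CommRing R] [AddCommGroup M] [Module R M]

theorem mem_ker_sub_smul_id_iff {f : M →ₗ[R] M} {c : R} {z : M} :
    z ∈ ker (f - c • id) ↔ f z = c • z := by
  rw [mem_ker, sub_apply, smul_apply, id_apply, sub_eq_zero]

theorem mem_ker_sup_ker_sub_smul_id_inf_iff {f : M →ₗ[R] M} {V : Submodule R M}
    (hcompl : IsCompl (ker f) V) (hfV : ∀ v ∈ V, f v ∈ V) (c : R) (z : M) :
    z ∈ ker f ⊔ (ker (f - c • id) ⊓ V) ↔ f (f z) = c • f z := by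
  constructor
  · intro hz
    obtain ⟨a, ha, u, ⟨hu, -⟩, rfl⟩ := mem_sup.1 hz
    rw [mem_ker] at ha
    rw [SetLike.mem_coe, mem_ker_sub_smul_id_iff] at hu
    simp [ha, hu]
  · intro hz
    obtain ⟨a, ha, v, hv, rfl⟩ := mem_sup.1 (hcompl.sup_eq_top ▸ mem_top : z ∈ ker f ⊔ V)
    rw [mem_ker] at ha
    have hw : f v - c • v ∈ ker f ⊓ V := by
      refine ⟨?_, sub_mem (hfV v hv) (smul_mem _ c hv)⟩
      simpa [ha, sub_eq_zero] using hz
    rw [hcompl.inf_eq_bot, mem_bot, sub_eq_zero] at hw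
    exact mem_sup.2 ⟨a, ha, v, ⟨mem_ker_sub_smul_id_iff.2 hw, hv⟩, rfl⟩

end LinearMap

section ComplexStructure

variable {E : Type*} [AddCommGroup E] [Module ℂ E]

def nijenhuis (lb : E →ₗ[ℂ] E →ₗ[ℂ] E) (I : E →ₗ[ℂ] E) : E →ₗ[ℂ] E →ₗ[ℂ] E :=
  (lb ∘ₗ I).compr₂ I + (lb.compl₂ I).compr₂ I + lb - (lb ∘ₗ I).compl₂ I

@[simp]
theorem nijenhuis_apply (lb : E →ₗ[ℂ] E →ₗ[ℂ] E) (I : E →ₗ[ℂ] E) (x y : E) :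
    nijenhuis lb I x y = I (lb (I x) y) + I (lb x (I y)) + lb x y - lb (I x) (I y) :=
  rfl

variable {lb : E →ₗ[ℂ] E →ₗ[ℂ] E} {I : E →ₗ[ℂ] E}

theorem apply_apply_bracket_eq_I_smul_of_mem_ker {V : Submodule ℂ E}
    (hequiv : ∀ z ∈ ker I, ∀ v ∈ V, I (lb z v) - lb z (I v) ∈ ker I) {a w : E}
    (ha : a ∈ ker I) (hw : w ∈ ker (I - Complex.I • LinearMap.id) ⊓ V) :
    I (I (lb a w)) = Complex.I • I (lb a w) := by
  have h := hequiv a ha w hw.2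
  rw [mem_ker, map_sub, sub_eq_zero] at h
  rw [h, mem_ker_sub_smul_id_iff.1 hw.1, map_smul, map_smul]

theorem apply_apply_bracket_eq_I_smul_of_eigen {u w : E} (hN : I (nijenhuis lb I u w) = 0)
    (hu : I u = Complex.I • u) (hw : I w = Complex.I • w) :
    I (I (lb u w)) = Complex.I • I (lb u w) := by
  have hN' : nijenhuis lb I u w = (2 * Complex.I) • I (lb u w) + (2 : ℂ) • lb u w := by
    rw [nijenhuis_apply, hu, hw]
    simp only [map_smul, LinearMap.smul_apply, smul_smul, Complex.I_mul_I]
    module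
  rw [hN', map_add, map_smul, map_smul] at hN
  linear_combination (norm := module) (-Complex.I / 2) • hN + Complex.I_sq • I (I (lb u w))

theorem apply_apply_bracket_eq_I_smul_of_mem {V : Submodule ℂ E}
    (hskew : ∀ x y, lb x y = -lb y x)
    (hker : ∀ x ∈ ker I, ∀ y ∈ ker I, lb x y ∈ ker I)
    (hequiv : ∀ z ∈ ker I, ∀ v ∈ V, I (lb z v) - lb z (I v) ∈ ker I)
    (hN : ∀ x y, nijenhuis lb I x y ∈ ker I) {x y : E}
    (hx : x ∈ ker I ⊔ (ker (I - Complex.I • LinearMap.id) ⊓ V))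
    (hy : y ∈ ker I ⊔ (ker (I - Complex.I • LinearMap.id) ⊓ V)) :
    I (I (lb x y)) = Complex.I • I (lb x y) := by
  obtain ⟨a, ha, u, hu, rfl⟩ := mem_sup.1 hx
  obtain ⟨b, hb, w, hw, rfl⟩ := mem_sup.1 hy
  have hab : I (lb a b) = 0 := hker a ha b hb
  have hub : I (I (lb u b)) = Complex.I • I (lb u b) := by
    rw [hskew, map_neg, map_neg, apply_apply_bracket_eq_I_smul_of_mem_ker hequiv hb hu, smul_neg]
  have huw := apply_apply_bracket_eq_I_smul_of_eigen (hN u w) (mem_ker_sub_smul_id_iff.1 hu.1)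
    (mem_ker_sub_smul_id_iff.1 hw.1)
  simp only [map_add, LinearMap.add_apply, hab, zero_add,
    apply_apply_bracket_eq_I_smul_of_mem_ker hequiv ha hw, hub, huw, smul_add]

theorem exists_eq_add_mem_ker_sub_smul_id {V : Submodule ℂ E} (hIV : ∀ x ∈ V, I x ∈ V)
    (hI2 : ∀ x ∈ V, I (I x) = -x) {v : E} (hv : v ∈ V) :
    ∃ p q, p ∈ ker (I - Complex.I • LinearMap.id) ⊓ V ∧
      q ∈ ker (I - (-Complex.I) • LinearMap.id) ⊓ V ∧ v = p + q := by
  have hIv := hIV v hv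
  refine ⟨(2 : ℂ)⁻¹ • (v - Complex.I • I v), (2 : ℂ)⁻¹ • (v + Complex.I • I v),
    ⟨mem_ker_sub_smul_id_iff.2 ?_, smul_mem _ _ (sub_mem hv (smul_mem _ _ hIv))⟩,
    ⟨mem_ker_sub_smul_id_iff.2 ?_, smul_mem _ _ (add_mem hv (smul_mem _ _ hIv))⟩,
    by module⟩ <;>
  · simp only [map_smul, map_sub, map_add, hI2 v hv]
    linear_combination (norm := module) (2 : ℂ)⁻¹ • Complex.I_sq • I v

end ComplexStructure

section RealStructure

variable {E F : Type*} [AddCommGroup E] [Module ℂ E] [Module ℝ E]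
  [AddCommGroup F] [Module ℂ F] {σ : E →ₗ[ℝ] E}

theorem exists_conj_fixed_eq_add_I_smul (hσ_invol : ∀ z, σ (σ z) = z)
    (hσ_antilinear : ∀ (c : ℂ) (z : E), σ (c • z) = (starRingEnd ℂ) c • σ z) (z : E) :
    ∃ r s, σ r = r ∧ σ s = s ∧ z = r + Complex.I • s := by
  refine ⟨(2 : ℂ)⁻¹ • (z + σ z), (-((2 : ℂ)⁻¹ * Complex.I)) • (z - σ z), ?_, ?_, ?_⟩
  · rw [hσ_antilinear, map_add, hσ_invol]
    simp only [map_inv₀, Complex.conj_ofNat]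
    module
  · rw [hσ_antilinear, map_sub, hσ_invol]
    simp only [map_neg, map_mul, map_inv₀, Complex.conj_ofNat, Complex.conj_I]
    module
  · rw [smul_smul, show Complex.I * -((2 : ℂ)⁻¹ * Complex.I) = (2 : ℂ)⁻¹ by
      linear_combination (-(2 : ℂ)⁻¹) * Complex.I_sq]
    module

theorem LinearMap.apply_apply_mem_of_forall_conj_fixed (hσ_invol : ∀ z, σ (σ z) = z)
    (hσ_antilinear : ∀ (c : ℂ) (z : E), σ (c • z) = (starRingEnd ℂ) c • σ z)
    (B : E →ₗ[ℂ] E →ₗ[ℂ] F) {S : Submodule ℂ F}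
    (hB : ∀ r s, σ r = r → σ s = s → B r s ∈ S) (x y : E) : B x y ∈ S := by
  obtain ⟨r, s, hr, hs, rfl⟩ := exists_conj_fixed_eq_add_I_smul hσ_invol hσ_antilinear x
  obtain ⟨r', s', hr', hs', rfl⟩ := exists_conj_fixed_eq_add_I_smul hσ_invol hσ_antilinear y
  simp only [map_add, map_smul, add_apply, smul_apply]
  exact add_mem (add_mem (hB r r' hr hr') (smul_mem _ _ (hB s r' hs hr')))
    (smul_mem _ _ (add_mem (hB r s' hr hs') (smul_mem _ _ (hB s s' hs hs'))))

variable {I : E →ₗ[ℂ] E}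

theorem exists_eq_add_conj {V : Submodule ℂ E} (hσ_invol : ∀ z, σ (σ z) = z)
    (hσ_antilinear : ∀ (c : ℂ) (z : E), σ (c • z) = (starRingEnd ℂ) c • σ z)
    (hIσ : ∀ z, σ (I z) = I (σ z)) (hVσ : ∀ z ∈ V, σ z ∈ V) (hcompl : IsCompl (ker I) V)
    (hIV : ∀ x ∈ V, I x ∈ V) (hI2 : ∀ x ∈ V, I (I x) = -x) (z : E) :
    ∃ a b, a ∈ ker I ⊔ (ker (I - Complex.I • LinearMap.id) ⊓ V) ∧
      b ∈ ker I ⊔ (ker (I - Complex.I • LinearMap.id) ⊓ V) ∧ z = a + σ b := by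
  obtain ⟨a, ha, v, hv, rfl⟩ := mem_sup.1 (hcompl.sup_eq_top ▸ mem_top : z ∈ ker I ⊔ V)
  obtain ⟨p, q, hp, ⟨hq, hqV⟩, rfl⟩ := exists_eq_add_mem_ker_sub_smul_id hIV hI2 hv
  have hσq : I (σ q) = Complex.I • σ q := by
    rw [← hIσ, mem_ker_sub_smul_id_iff.1 hq, hσ_antilinear, map_neg, Complex.conj_I, neg_neg]
  refine ⟨a + p, σ q, add_mem (mem_sup_left ha) (mem_sup_right hp),
    mem_sup_right ⟨mem_ker_sub_smul_id_iff.2 hσq, hVσ q hqV⟩, ?_⟩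
  rw [hσ_invol, add_assoc]

theorem apply_eq_zero_of_apply_apply_eq_I_smul (hσ_invol : ∀ z, σ (σ z) = z)
    (hσ_antilinear : ∀ (c : ℂ) (z : E), σ (c • z) = (starRingEnd ℂ) c • σ z)
    (hIσ : ∀ z, σ (I z) = I (σ z)) {z : E} (hz : I (I z) = Complex.I • I z)
    (hσz : I (I (σ z)) = Complex.I • I (σ z)) : I z = 0 := by
  have hconj : I (I z) = -Complex.I • I z := by
    have h := congrArg σ hσz
    rwa [hσ_antilinear, Complex.conj_I, ← hIσ, ← hIσ, hσ_invol, hσ_invol] at h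
  have h2 : (2 * Complex.I) • I z = 0 := by
    linear_combination (norm := module) hconj - hz
  exact (smul_eq_zero.1 h2).resolve_left (by simp)

end RealStructure

theorem stmt_12_general {gc : Type*} [NormedAddCommGroup gc] [NormedSpace ℂ gc]
    (σ : gc →ₗ[ℝ] gc)
    (hσ_invol : ∀ z, σ (σ z) = z)
    (hσ_antilinear : ∀ (c : ℂ) (z : gc), σ (c • z) = (starRingEnd ℂ c) • σ z)
    (lb : gc →L[ℂ] gc →L[ℂ] gc)
    (hlb_skew : ∀ x y : gc, lb x y = -lb y x)
    (I : gc →L[ℂ] gc)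
    (hIσ : ∀ z : gc, σ (I z) = I (σ z))
    (hker_subalg : ∀ x ∈ LinearMap.ker (I : gc →ₗ[ℂ] gc), ∀ y ∈ LinearMap.ker (I : gc →ₗ[ℂ] gc), lb x y ∈ LinearMap.ker (I : gc →ₗ[ℂ] gc))
    (VC : Submodule ℂ gc)
    (hVCσ : ∀ z ∈ VC, σ z ∈ VC)
    (hcompl : IsCompl (LinearMap.ker (I : gc →ₗ[ℂ] gc)) VC)
    (hIV : ∀ x ∈ VC, I x ∈ VC)
    (hI2 : ∀ x ∈ VC, I (I x) = -x)
    (hequiv : ∀ z ∈ LinearMap.ker (I : gc →ₗ[ℂ] gc), ∀ v ∈ VC, I (lb z v) - lb z (I v) ∈ LinearMap.ker (I : gc →ₗ[ℂ] gc))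
    (htorsion : ∀ x y : gc, σ x = x → σ y = y →
      I (lb (I x) y) + I (lb x (I y)) + lb x y - lb (I x) (I y) ∈ LinearMap.ker (I : gc →ₗ[ℂ] gc)) :
    (IsClosed ((LinearMap.ker (I : gc →ₗ[ℂ] gc) ⊔
        (LinearMap.ker ((I - Complex.I • ContinuousLinearMap.id ℂ gc : gc →L[ℂ] gc) :
              gc →ₗ[ℂ] gc) ⊓ VC) :
          Submodule ℂ gc) : Set gc))
    ∧ (∀ x ∈ (LinearMap.ker (I : gc →ₗ[ℂ] gc) ⊔
          (LinearMap.ker ((I - Complex.I • ContinuousLinearMap.id ℂ gc : gc →L[ℂ] gc) :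
              gc →ₗ[ℂ] gc) ⊓ VC) :
            Submodule ℂ gc),
        ∀ y ∈ (LinearMap.ker (I : gc →ₗ[ℂ] gc) ⊔
          (LinearMap.ker ((I - Complex.I • ContinuousLinearMap.id ℂ gc : gc →L[ℂ] gc) :
              gc →ₗ[ℂ] gc) ⊓ VC) :
            Submodule ℂ gc),
        lb x y ∈ (LinearMap.ker (I : gc →ₗ[ℂ] gc) ⊔
          (LinearMap.ker ((I - Complex.I • ContinuousLinearMap.id ℂ gc : gc →L[ℂ] gc) :
              gc →ₗ[ℂ] gc) ⊓ VC) :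
            Submodule ℂ gc))
    ∧ (∀ z : gc, ∃ a b : gc,
        a ∈ (LinearMap.ker (I : gc →ₗ[ℂ] gc) ⊔
          (LinearMap.ker ((I - Complex.I • ContinuousLinearMap.id ℂ gc : gc →L[ℂ] gc) :
              gc →ₗ[ℂ] gc) ⊓ VC) :
            Submodule ℂ gc) ∧
        b ∈ (LinearMap.ker (I : gc →ₗ[ℂ] gc) ⊔
          (LinearMap.ker ((I - Complex.I • ContinuousLinearMap.id ℂ gc : gc →L[ℂ] gc) :
              gc →ₗ[ℂ] gc) ⊓ VC) :
            Submodule ℂ gc) ∧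
        z = a + σ b)
    ∧ (∀ z : gc,
        (z ∈ (LinearMap.ker (I : gc →ₗ[ℂ] gc) ⊔
            (LinearMap.ker ((I - Complex.I • ContinuousLinearMap.id ℂ gc : gc →L[ℂ] gc) :
              gc →ₗ[ℂ] gc) ⊓ VC) :
              Submodule ℂ gc)
          ∧ σ z ∈ (LinearMap.ker (I : gc →ₗ[ℂ] gc) ⊔
            (LinearMap.ker ((I - Complex.I • ContinuousLinearMap.id ℂ gc : gc →L[ℂ] gc) :
              gc →ₗ[ℂ] gc) ⊓ VC) :
              Submodule ℂ gc))
        ↔ I z = 0) := by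
  have hcoe : ((I - Complex.I • ContinuousLinearMap.id ℂ gc : gc →L[ℂ] gc) : gc →ₗ[ℂ] gc) =
      (I : gc →ₗ[ℂ] gc) - Complex.I • LinearMap.id := rfl
  have hmem : ∀ z, z ∈ ker (I : gc →ₗ[ℂ] gc) ⊔
      (ker ((I : gc →ₗ[ℂ] gc) - Complex.I • LinearMap.id) ⊓ VC) ↔ I (I z) = Complex.I • I z :=
    mem_ker_sup_ker_sub_smul_id_inf_iff hcompl hIV Complex.I
  have hN : ∀ x y, nijenhuis lb.toLinearMap₁₂ I x y ∈ ker (I : gc →ₗ[ℂ] gc) :=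
    apply_apply_mem_of_forall_conj_fixed hσ_invol hσ_antilinear _ htorsion
  rw [hcoe]
  refine ⟨?_, fun x hx y hy ↦ (hmem _).2
    (apply_apply_bracket_eq_I_smul_of_mem hlb_skew hker_subalg hequiv hN hx hy),
    exists_eq_add_conj hσ_invol hσ_antilinear hIσ hVCσ hcompl hIV hI2, fun z ↦ ⟨?_, ?_⟩⟩
  · rw [show (_ : Set gc) = {z | I (I z) = Complex.I • I z} from Set.ext hmem]
    exact isClosed_eq (by fun_prop) (by fun_prop)
  · rintro ⟨hz, hσz⟩
    exact apply_eq_zero_of_apply_apply_eq_I_smul hσ_invol hσ_antilinear hIσ ((hmem z).1 hz)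
      ((hmem _).1 hσz)
  · intro hz
    have hσz : I (σ z) = 0 := by rw [← hIσ, hz, map_zero]
    exact ⟨mem_sup_left hz, mem_sup_left hσz⟩

/-- Let `g_ℂ` be the complexification of a real Banach-Lie algebra `g`
(conjugation `σ` fixing `g`, bracket `lb` extended complex-bilinearly and
`σ`-equivariant), `h = ker I` a closed subalgebra, `V` a closed complement with
`I(V) ⊆ V`, `(I|_V)² = −id_V` (here `I` denotes the complex-linear extension,
commuting with `σ`), the equivariance `I[z,v] − [z,Iv] ∈ h` for `z ∈ h`, `v ∈ V`,
and the torsion condition `N(x,y) := I[Ix,y] + I[x,Iy] + [x,y] − [Ix,Iy] ∈ h` for all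
real `x, y`.  Then `k := h_ℂ + ker(I − i·id) ∩ V_ℂ` is a closed complex subalgebra of
`g_ℂ` with `k + k̄ = g_ℂ` and `k ∩ k̄ = h_ℂ`, where `k̄` is the `σ`-image of `k`. -/
theorem stmt_12 {gc : Type*} [NormedAddCommGroup gc] [NormedSpace ℂ gc] [CompleteSpace gc]
    (σ : gc →ₗ[ℝ] gc)
    (hσ_cont : Continuous σ)
    (hσ_invol : ∀ z, σ (σ z) = z)
    (hσ_antilinear : ∀ (c : ℂ) (z : gc), σ (c • z) = (starRingEnd ℂ c) • σ z)
    (lb : gc →L[ℂ] gc →L[ℂ] gc)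
    (hlb_skew : ∀ x y : gc, lb x y = -lb y x)
    (hlb_jacobi : ∀ x y z : gc, lb x (lb y z) + lb y (lb z x) + lb z (lb x y) = 0)
    (hlbσ : ∀ x y : gc, σ (lb x y) = lb (σ x) (σ y))
    (I : gc →L[ℂ] gc)
    (hIσ : ∀ z : gc, σ (I z) = I (σ z))
    (hker_subalg : ∀ x ∈ LinearMap.ker (I : gc →ₗ[ℂ] gc), ∀ y ∈ LinearMap.ker (I : gc →ₗ[ℂ] gc), lb x y ∈ LinearMap.ker (I : gc →ₗ[ℂ] gc))
    (VC : Submodule ℂ gc)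
    (hVC_closed : IsClosed (VC : Set gc))
    (hVCσ : ∀ z ∈ VC, σ z ∈ VC)
    (hcompl : IsCompl (LinearMap.ker (I : gc →ₗ[ℂ] gc)) VC)
    (hIV : ∀ x ∈ VC, I x ∈ VC)
    (hI2 : ∀ x ∈ VC, I (I x) = -x)
    (hequiv : ∀ z ∈ LinearMap.ker (I : gc →ₗ[ℂ] gc), ∀ v ∈ VC, I (lb z v) - lb z (I v) ∈ LinearMap.ker (I : gc →ₗ[ℂ] gc))
    (htorsion : ∀ x y : gc, σ x = x → σ y = y →
      I (lb (I x) y) + I (lb x (I y)) + lb x y - lb (I x) (I y) ∈ LinearMap.ker (I : gc →ₗ[ℂ] gc)) :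
    (IsClosed ((LinearMap.ker (I : gc →ₗ[ℂ] gc) ⊔
        (LinearMap.ker ((I - Complex.I • ContinuousLinearMap.id ℂ gc : gc →L[ℂ] gc) :
              gc →ₗ[ℂ] gc) ⊓ VC) :
          Submodule ℂ gc) : Set gc))
    ∧ (∀ x ∈ (LinearMap.ker (I : gc →ₗ[ℂ] gc) ⊔
          (LinearMap.ker ((I - Complex.I • ContinuousLinearMap.id ℂ gc : gc →L[ℂ] gc) :
              gc →ₗ[ℂ] gc) ⊓ VC) :
            Submodule ℂ gc),
        ∀ y ∈ (LinearMap.ker (I : gc →ₗ[ℂ] gc) ⊔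
          (LinearMap.ker ((I - Complex.I • ContinuousLinearMap.id ℂ gc : gc →L[ℂ] gc) :
              gc →ₗ[ℂ] gc) ⊓ VC) :
            Submodule ℂ gc),
        lb x y ∈ (LinearMap.ker (I : gc →ₗ[ℂ] gc) ⊔
          (LinearMap.ker ((I - Complex.I • ContinuousLinearMap.id ℂ gc : gc →L[ℂ] gc) :
              gc →ₗ[ℂ] gc) ⊓ VC) :
            Submodule ℂ gc))
    ∧ (∀ z : gc, ∃ a b : gc,
        a ∈ (LinearMap.ker (I : gc →ₗ[ℂ] gc) ⊔
          (LinearMap.ker ((I - Complex.I • ContinuousLinearMap.id ℂ gc : gc →L[ℂ] gc) :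
              gc →ₗ[ℂ] gc) ⊓ VC) :
            Submodule ℂ gc) ∧
        b ∈ (LinearMap.ker (I : gc →ₗ[ℂ] gc) ⊔
          (LinearMap.ker ((I - Complex.I • ContinuousLinearMap.id ℂ gc : gc →L[ℂ] gc) :
              gc →ₗ[ℂ] gc) ⊓ VC) :
            Submodule ℂ gc) ∧
        z = a + σ b)
    ∧ (∀ z : gc,
        (z ∈ (LinearMap.ker (I : gc →ₗ[ℂ] gc) ⊔
            (LinearMap.ker ((I - Complex.I • ContinuousLinearMap.id ℂ gc : gc →L[ℂ] gc) :
              gc →ₗ[ℂ] gc) ⊓ VC) :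
              Submodule ℂ gc)
          ∧ σ z ∈ (LinearMap.ker (I : gc →ₗ[ℂ] gc) ⊔
            (LinearMap.ker ((I - Complex.I • ContinuousLinearMap.id ℂ gc : gc →L[ℂ] gc) :
              gc →ₗ[ℂ] gc) ⊓ VC) :
              Submodule ℂ gc))
        ↔ I z = 0) :=
  stmt_12_general σ hσ_invol hσ_antilinear lb hlb_skew I hIσ hker_subalg VC hVCσ hcompl hIV hI2
    hequiv htorsion
end

section
/- Let g be a real Banach-Lie algebra with complexification g_ℂ carrying conjugation z ↦ z̄ fixing g, h a closed subalgebra of g, and k a closed complex subspace of g_ℂ with k + k̄ = g_ℂ and k ∩ k̄ = h_ℂ. Then the natural map ν : g/h → g_ℂ/k, x + h ↦ x + k, is an isomorphism of real Banach spaces. -/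
/-- Let `g_ℂ` carry a conjugation `σ` fixing the real form `g`, let `h` be
a closed subalgebra of `g` with complexification `h_ℂ = h ⊕ ih`, and let `k` be a closed
complex subspace of `g_ℂ` with `k + k̄ = g_ℂ` and `k ∩ k̄ = h_ℂ`.  Then the natural map
`ν : g/h → g_ℂ/k`, `x + h ↦ x + k`, is an isomorphism of real Banach spaces; stated
elementwise: `ν` is injective (`k ∩ g = h`) and surjective (`g + k = g_ℂ`). -/
theorem stmt_13 {gc : Type*} [NormedAddCommGroup gc] [NormedSpace ℂ gc] [CompleteSpace gc]
    (σ : gc →ₗ[ℝ] gc)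
    (hσ_cont : Continuous σ)
    (hσ_invol : ∀ z, σ (σ z) = z)
    (hσ_antilinear : ∀ (c : ℂ) (z : gc), σ (c • z) = (starRingEnd ℂ c) • σ z)
    (h : Submodule ℝ gc)
    (hh_closed : IsClosed (h : Set gc))
    (hh_real : ∀ x ∈ h, σ x = x)
    (hC : Submodule ℂ gc)
    (hhC : ∀ z : gc, z ∈ hC ↔ ∃ x ∈ h, ∃ y ∈ h, z = x + Complex.I • y)
    (k : Submodule ℂ gc)
    (hk_closed : IsClosed (k : Set gc))
    (hk_sup : ∀ z : gc, ∃ a b : gc, a ∈ k ∧ b ∈ k ∧ z = a + σ b)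
    (hk_inf : ∀ z : gc, (z ∈ k ∧ σ z ∈ k) ↔ z ∈ hC) :
    (∀ x : gc, σ x = x → x ∈ k → x ∈ h)
      ∧ (∀ z : gc, ∃ x : gc, σ x = x ∧ z - x ∈ k) := by
  constructor
  · intro x hx hxk
    have hxhC : x ∈ hC := (hk_inf x).1 ⟨hxk, by rw [hx]; exact hxk⟩
    obtain ⟨a, ha, b, hb, hab⟩ := (hhC x).1 hxhC
    have hσx : σ x = a - Complex.I • b := by
      rw [hab, map_add, hσ_antilinear, hh_real a ha, hh_real b hb]
      simp [Complex.conj_I, sub_eq_add_neg, neg_smul]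
    have h2 : Complex.I • b + Complex.I • b = 0 := by
      have e : a + Complex.I • b = a - Complex.I • b := by
        rw [← hab, ← hσx, hx]
      have := sub_eq_zero.2 e
      rw [show a + Complex.I • b - (a - Complex.I • b)
          = Complex.I • b + Complex.I • b by abel] at this
      exact this
    have hb0 : b = 0 := by
      have h3 : (2 * Complex.I) • b = 0 := by
        rw [two_mul, add_smul]; exact h2
      have := congrArg (fun v => (2 * Complex.I)⁻¹ • v) h3
      simpa [smul_smul, inv_mul_cancel₀ (mul_ne_zero two_ne_zero Complex.I_ne_zero)]
        using this
    rw [hab, hb0, smul_zero, add_zero]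
    exact ha
  · intro z
    obtain ⟨a, b, ha, hb, hab⟩ := hk_sup z
    refine ⟨b + σ b, ?_, ?_⟩
    · rw [map_add, hσ_invol, add_comm]
    · have e : z - (b + σ b) = a - b := by rw [hab]; abel
      rw [e]
      exact k.sub_mem ha hb
end

section
/- Let g be a real Banach-Lie algebra, h a closed subalgebra, V a closed complement (g = h ⊕ V), and k a closed complex subalgebra of g_ℂ with k + k̄ = g_ℂ and k ∩ k̄ = h_ℂ. Then g_ℂ = h_ℂ ⊕ (V_ℂ ∩ k) ⊕ (V_ℂ ∩ k̄) as a topological direct sum of closed complex subspaces. -/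
/-!
Since `h_ℂ = k ∩ k̄` lies in both `k` and `k̄`, the modular law applied to `g_ℂ = h_ℂ ⊕ V_ℂ` gives
`k = h_ℂ ⊕ (V_ℂ ∩ k)` and `k̄ = h_ℂ ⊕ (V_ℂ ∩ k̄)`, so `g_ℂ = k + k̄ = h_ℂ + (V_ℂ ∩ k) + (V_ℂ ∩ k̄)`.
The sum is direct because `k ∩ (V_ℂ ∩ k̄) = V_ℂ ∩ h_ℂ = 0`.
-/

namespace IsCompl

variable {α : Type*} [Lattice α] [BoundedOrder α] [IsModularLattice α] {h v k k' : α}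

theorem sup_inf_eq_of_le (hcompl : IsCompl h v) (hk : h ≤ k) : h ⊔ v ⊓ k = k := by
  rw [← sup_inf_assoc_of_le v hk, hcompl.sup_eq_top, top_inf_eq]

theorem sup_inf_sup_inf_eq_top (hcompl : IsCompl h v) (hsup : k ⊔ k' = ⊤) (hinf : k ⊓ k' = h) :
    h ⊔ v ⊓ k ⊔ v ⊓ k' = ⊤ := by
  have hk : h ≤ k := hinf ▸ inf_le_left
  have hk' : h ≤ k' := hinf ▸ inf_le_right
  calc h ⊔ v ⊓ k ⊔ v ⊓ k' = k ⊔ (h ⊔ v ⊓ k') := by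
        rw [hcompl.sup_inf_eq_of_le hk, ← sup_assoc, sup_eq_left.mpr hk]
    _ = ⊤ := by rw [hcompl.sup_inf_eq_of_le hk', hsup]

theorem disjoint_sup_inf_inf (hcompl : IsCompl h v) (hinf : k ⊓ k' = h) :
    Disjoint (h ⊔ v ⊓ k) (v ⊓ k') := by
  rw [hcompl.sup_inf_eq_of_le (hinf ▸ inf_le_left), disjoint_iff, inf_left_comm, hinf,
    inf_comm]
  exact hcompl.inf_eq_bot

end IsCompl

namespace Submodule

variable {R M : Type*} [Ring R] [AddCommGroup M] [Module R M] {A B C : Submodule R M}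

theorem existsUnique_add_add (hsup : A ⊔ B ⊔ C = ⊤) (hAB : Disjoint A B)
    (hABC : Disjoint (A ⊔ B) C) (z : M) :
    ∃! t : M × M × M, t.1 ∈ A ∧ t.2.1 ∈ B ∧ t.2.2 ∈ C ∧ z = t.1 + t.2.1 + t.2.2 := by
  obtain ⟨x, hx, c, hc, rfl⟩ := mem_sup.mp (hsup ▸ mem_top : z ∈ A ⊔ B ⊔ C)
  obtain ⟨a, ha, b, hb, rfl⟩ := mem_sup.mp hx
  refine ⟨(a, b, c), ⟨ha, hb, hc, rfl⟩, ?_⟩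
  rintro ⟨a', b', c'⟩ ⟨ha', hb', hc', hz : a + b + c = a' + b' + c'⟩
  have hc_eq : c' = c := by
    have hmem : c' - c ∈ A ⊔ B := by
      rw [show c' - c = a + b - (a' + b') by
        rw [sub_eq_sub_iff_add_eq_add, hz]; abel]
      exact sub_mem (add_mem_sup ha hb) (add_mem_sup ha' hb')
    exact sub_eq_zero.mp (disjoint_def.mp hABC _ hmem (sub_mem hc' hc))
  subst hc_eq
  have hab : a' + b' = a + b := (add_right_cancel hz).symm
  have ha_eq : a' = a := by
    have hmem : a' - a ∈ B := by
      rw [show a' - a = b - b' by rw [sub_eq_sub_iff_add_eq_add, hab, add_comm]]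
      exact sub_mem hb hb'
    exact sub_eq_zero.mp (disjoint_def.mp hAB _ (sub_mem ha' ha) hmem)
  subst ha_eq
  rw [add_left_cancel hab]

end Submodule

theorem stmt_15_general {gc : Type*} [NormedAddCommGroup gc] [NormedSpace ℂ gc]
    (σ : gc →ₗ[ℝ] gc)
    (hσ_invol : ∀ z, σ (σ z) = z)
    (hC VC : Submodule ℂ gc)
    (hcompl : IsCompl hC VC)
    (k : Submodule ℂ gc)
    (hk_sup : ∀ z : gc, ∃ a b : gc, a ∈ k ∧ b ∈ k ∧ z = a + σ b)
    (hk_inf : ∀ z : gc, (z ∈ k ∧ σ z ∈ k) ↔ z ∈ hC) :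
    ∀ z : gc, ∃! t : gc × gc × gc,
      t.1 ∈ hC ∧ t.2.1 ∈ VC ∧ t.2.1 ∈ k ∧ t.2.2 ∈ VC ∧ σ t.2.2 ∈ k ∧
      z = t.1 + t.2.1 + t.2.2 := by
  -- `k̄ = σ⁻¹(k)` is taken as a real subspace, so the lattice argument runs in `Submodule ℝ gc`.
  set K := k.restrictScalars ℝ
  set Kbar := K.comap σ
  have hsup : K ⊔ Kbar = ⊤ := by
    refine Submodule.eq_top_iff'.mpr fun z ↦ ?_
    obtain ⟨a, b, ha, hb, hz⟩ := hk_sup z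
    exact Submodule.mem_sup.mpr ⟨a, ha, σ b, by simpa [Kbar, K, hσ_invol] using hb, hz.symm⟩
  have hinf : K ⊓ Kbar = hC.restrictScalars ℝ := by
    ext z
    simpa [Kbar, K] using hk_inf z
  have hcomplℝ : IsCompl (hC.restrictScalars ℝ) (VC.restrictScalars ℝ) :=
    (Submodule.isCompl_restrictScalars_iff ℝ).mpr hcompl
  intro z
  simpa [Kbar, K, and_assoc] using Submodule.existsUnique_add_add
    (hcomplℝ.sup_inf_sup_inf_eq_top hsup hinf) (hcomplℝ.disjoint.mono_right inf_le_left)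
    (hcomplℝ.disjoint_sup_inf_inf hinf) z

/-- Let `g_ℂ` (conjugation `σ`) decompose as `g_ℂ = h_ℂ ⊕ V_ℂ` with
`h_ℂ`, `V_ℂ` closed `σ`-invariant complex subspaces, `h_ℂ` a subalgebra, and let `k`
be a closed complex subalgebra with `k + k̄ = g_ℂ` and `k ∩ k̄ = h_ℂ`.  Then
`g_ℂ = h_ℂ ⊕ (V_ℂ ∩ k) ⊕ (V_ℂ ∩ k̄)`: every `z ∈ g_ℂ` has a unique decomposition
`z = a + b + c` with `a ∈ h_ℂ`, `b ∈ V_ℂ ∩ k`, `c ∈ V_ℂ ∩ k̄` (a topological direct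
sum of closed subspaces, automatic by the open mapping theorem). -/
theorem stmt_15 {gc : Type*} [NormedAddCommGroup gc] [NormedSpace ℂ gc] [CompleteSpace gc]
    (σ : gc →ₗ[ℝ] gc)
    (hσ_cont : Continuous σ)
    (hσ_invol : ∀ z, σ (σ z) = z)
    (hσ_antilinear : ∀ (c : ℂ) (z : gc), σ (c • z) = (starRingEnd ℂ c) • σ z)
    (lb : gc →L[ℂ] gc →L[ℂ] gc)
    (hlb_skew : ∀ x y : gc, lb x y = -lb y x)
    (hlb_jacobi : ∀ x y z : gc, lb x (lb y z) + lb y (lb z x) + lb z (lb x y) = 0)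
    (hlbσ : ∀ x y : gc, σ (lb x y) = lb (σ x) (σ y))
    (hC VC : Submodule ℂ gc)
    (hhC_closed : IsClosed (hC : Set gc)) (hVC_closed : IsClosed (VC : Set gc))
    (hhCσ : ∀ z ∈ hC, σ z ∈ hC) (hVCσ : ∀ z ∈ VC, σ z ∈ VC)
    (hhC_subalg : ∀ x ∈ hC, ∀ y ∈ hC, lb x y ∈ hC)
    (hcompl : IsCompl hC VC)
    (k : Submodule ℂ gc)
    (hk_closed : IsClosed (k : Set gc))
    (hk_subalg : ∀ x ∈ k, ∀ y ∈ k, lb x y ∈ k)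
    (hk_sup : ∀ z : gc, ∃ a b : gc, a ∈ k ∧ b ∈ k ∧ z = a + σ b)
    (hk_inf : ∀ z : gc, (z ∈ k ∧ σ z ∈ k) ↔ z ∈ hC) :
    ∀ z : gc, ∃! t : gc × gc × gc,
      t.1 ∈ hC ∧ t.2.1 ∈ VC ∧ t.2.1 ∈ k ∧ t.2.2 ∈ VC ∧ σ t.2.2 ∈ k ∧
      z = t.1 + t.2.1 + t.2.2 :=
  stmt_15_general σ hσ_invol hC VC hcompl k hk_sup hk_inf
end

section
/- Let g be a real Banach-Lie algebra, h a closed subalgebra, V a closed complement, and k a closed complex subalgebra of g_ℂ with k + k̄ = g_ℂ, k ∩ k̄ = h_ℂ. Define the complex-linear operator I on g_ℂ by: I = 0 on h_ℂ, I = −i·id on V_ℂ ∩ k, I = +i·id on V_ℂ ∩ k̄ (using g_ℂ = h_ℂ ⊕ (V_ℂ∩k) ⊕ (V_ℂ∩k̄)). Let χ : g_ℂ → h_ℂ be the projection with kernel V_ℂ ∩ k ⊕ V_ℂ ∩ k̄. Then for all x, y ∈ g_ℂ: I[Ix, y] + I[x, Iy] + [x, y] − [Ix, Iy] ∈ h_ℂ.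 In particular this holds for x, y ∈ g with values in h. -/
/-- In the setting `g_ℂ = h_ℂ ⊕ (V_ℂ ∩ k) ⊕ (V_ℂ ∩ k̄)` with `k`, `k̄`
closed complex subalgebras, `k + k̄ = g_ℂ`, `k ∩ k̄ = h_ℂ`, define the complex-linear
operator `I` by `I = 0` on `h_ℂ`, `I = −i·id` on `V_ℂ ∩ k`, `I = +i·id` on `V_ℂ ∩ k̄`.
Then the Nijenhuis-type expression `I[Ix,y] + I[x,Iy] + [x,y] − [Ix,Iy]` lies in `h_ℂ`
for all `x, y ∈ g_ℂ`; in particular, for real (`σ`-fixed) `x, y` it lies in the real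
form `h` of `h_ℂ` (it belongs to `h_ℂ` and is `σ`-fixed). -/
theorem stmt_16 {gc : Type*} [NormedAddCommGroup gc] [NormedSpace ℂ gc] [CompleteSpace gc]
    (σ : gc →ₗ[ℝ] gc)
    (hσ_cont : Continuous σ)
    (hσ_invol : ∀ z, σ (σ z) = z)
    (hσ_antilinear : ∀ (c : ℂ) (z : gc), σ (c • z) = (starRingEnd ℂ c) • σ z)
    (lb : gc →L[ℂ] gc →L[ℂ] gc)
    (hlb_skew : ∀ x y : gc, lb x y = -lb y x)
    (hlb_jacobi : ∀ x y z : gc, lb x (lb y z) + lb y (lb z x) + lb z (lb x y) = 0)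
    (hlbσ : ∀ x y : gc, σ (lb x y) = lb (σ x) (σ y))
    (hC VC : Submodule ℂ gc)
    (hhC_closed : IsClosed (hC : Set gc)) (hVC_closed : IsClosed (VC : Set gc))
    (hhCσ : ∀ z ∈ hC, σ z ∈ hC) (hVCσ : ∀ z ∈ VC, σ z ∈ VC)
    (hcompl : IsCompl hC VC)
    (k : Submodule ℂ gc)
    (hk_closed : IsClosed (k : Set gc))
    (hk_subalg : ∀ x ∈ k, ∀ y ∈ k, lb x y ∈ k)
    (hk_sup : ∀ z : gc, ∃ a b : gc, a ∈ k ∧ b ∈ k ∧ z = a + σ b)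
    (hk_inf : ∀ z : gc, (z ∈ k ∧ σ z ∈ k) ↔ z ∈ hC)
    (I : gc →L[ℂ] gc)
    (hIh : ∀ x ∈ hC, I x = 0)
    (hIk : ∀ x ∈ VC, x ∈ k → I x = -Complex.I • x)
    (hIkbar : ∀ x ∈ VC, σ x ∈ k → I x = Complex.I • x) :
    (∀ x y : gc,
      I (lb (I x) y) + I (lb x (I y)) + lb x y - lb (I x) (I y) ∈ hC)
    ∧
    (∀ x y : gc, σ x = x → σ y = y →
      (I (lb (I x) y) + I (lb x (I y)) + lb x y - lb (I x) (I y) ∈ hC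
        ∧ σ (I (lb (I x) y) + I (lb x (I y)) + lb x y - lb (I x) (I y))
            = I (lb (I x) y) + I (lb x (I y)) + lb x y - lb (I x) (I y))) := by
  -- hC is contained in both k and k̄
  have hCk : ∀ z ∈ hC, z ∈ k ∧ σ z ∈ k := fun z hz => (hk_inf z).mpr hz
  -- decomposition gc = hC ⊕ (VC ∩ k) ⊕ (VC ∩ k̄)
  have decomp : ∀ z : gc, ∃ h a b : gc, h ∈ hC ∧ a ∈ VC ∧ a ∈ k ∧ b ∈ VC ∧ σ b ∈ k ∧
      z = h + a + b := by
    intro z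
    have hz : z ∈ hC ⊔ VC := by rw [hcompl.sup_eq_top]; trivial
    obtain ⟨h0, h0m, v, vm, hzv⟩ := Submodule.mem_sup.mp hz
    obtain ⟨a', b', ha', hb', hv⟩ := hk_sup v
    have ha1 : a' ∈ hC ⊔ VC := by rw [hcompl.sup_eq_top]; trivial
    obtain ⟨h1, h1m, a2, a2m, ha2⟩ := Submodule.mem_sup.mp ha1
    have hb1 : σ b' ∈ hC ⊔ VC := by rw [hcompl.sup_eq_top]; trivial
    obtain ⟨h2, h2m, b2, b2m, hb2⟩ := Submodule.mem_sup.mp hb1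
    refine ⟨h0 + h1 + h2, a2, b2, ?_, a2m, ?_, b2m, ?_, ?_⟩
    · exact hC.add_mem (hC.add_mem h0m h1m) h2m
    · -- a2 = a' - h1 ∈ k
      have : a2 = a' - h1 := by rw [← ha2]; abel
      rw [this]
      exact k.sub_mem ha' (hCk h1 h1m).1
    · -- σ b2 = b' - σ h2 ∈ k
      have : b2 = σ b' - h2 := by rw [← hb2]; abel
      rw [this, map_sub, hσ_invol]
      exact k.sub_mem hb' (hCk h2 h2m).2
    · rw [← hzv, hv, ← ha2, ← hb2]; abel
  -- value of I on a decomposed element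
  have hIval : ∀ h a b : gc, h ∈ hC → a ∈ VC → a ∈ k → b ∈ VC → σ b ∈ k →
      I (h + a + b) = -Complex.I • a + Complex.I • b := by
    intro h a b hh haV hak hbV hbk
    rw [map_add, map_add, hIh h hh, hIk a haV hak, hIkbar b hbV hbk, zero_add]
  -- an element of VC ∩ k ∩ k̄ is zero
  have hzero : ∀ w : gc, w ∈ VC → w ∈ k → σ w ∈ k → w = 0 := by
    intro w hV hk1 hk2
    have hw : w ∈ hC := (hk_inf w).mp ⟨hk1, hk2⟩
    exact (Submodule.disjoint_def.mp hcompl.disjoint) w hw hV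
  -- z + i • I z ∈ k and σ (z - i • I z) ∈ k for all z
  have hplus : ∀ z : gc, z + Complex.I • I z ∈ k := by
    intro z
    obtain ⟨h, a, b, hh, haV, hak, hbV, hbk, hz⟩ := decomp z
    have : z + Complex.I • I z = h + (2 : ℂ) • a := by
      rw [hz, hIval h a b hh haV hak hbV hbk]
      rw [smul_add, smul_smul, smul_smul, mul_neg, Complex.I_mul_I, neg_neg, one_smul,
        neg_one_smul]
      rw [two_smul]; abel
    rw [this]
    exact k.add_mem (hCk h hh).1 (k.smul_mem _ hak)
  have hminus : ∀ z : gc, σ (z - Complex.I • I z) ∈ k := by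
    intro z
    obtain ⟨h, a, b, hh, haV, hak, hbV, hbk, hz⟩ := decomp z
    have : z - Complex.I • I z = h + (2 : ℂ) • b := by
      rw [hz, hIval h a b hh haV hak hbV hbk]
      rw [smul_add, smul_smul, smul_smul, mul_neg, Complex.I_mul_I, neg_neg, one_smul,
        neg_one_smul]
      rw [two_smul]; abel
    rw [this, map_add, hσ_antilinear]
    refine k.add_mem (hCk h hh).2 (k.smul_mem _ hbk)
  -- main claim for all x y
  have main : ∀ x y : gc,
      I (lb (I x) y) + I (lb x (I y)) + lb x y - lb (I x) (I y) ∈ hC := by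
    intro x y
    set A : gc := lb (I x) y + lb x (I y) with hA_def
    set B : gc := lb x y - lb (I x) (I y) with hB_def
    have hgoal : I (lb (I x) y) + I (lb x (I y)) + lb x y - lb (I x) (I y) = I A + B := by
      rw [hA_def, hB_def, map_add]; abel
    rw [hgoal]
    -- [x + iIx, y + iIy] = B + i A ∈ k
    have hu : B + Complex.I • A ∈ k := by
      have hmem := hk_subalg _ (hplus x) _ (hplus y)
      have heq : lb (x + Complex.I • I x) (y + Complex.I • I y) = B + Complex.I • A := by
        simp only [map_add, map_smul, ContinuousLinearMap.add_apply,
          ContinuousLinearMap.smul_apply, smul_add, smul_smul, Complex.I_mul_I, neg_one_smul,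
          hA_def, hB_def]
        abel
      rwa [heq] at hmem
    -- σ [x - iIx, y - iIy] = σ(B - i A) ∈ k
    have hv : σ (B - Complex.I • A) ∈ k := by
      have hmem := hk_subalg _ (hminus x) _ (hminus y)
      have heq : lb (x - Complex.I • I x) (y - Complex.I • I y) = B - Complex.I • A := by
        simp only [map_sub, map_smul, ContinuousLinearMap.sub_apply,
          ContinuousLinearMap.smul_apply, smul_sub, smul_add, smul_smul, Complex.I_mul_I, neg_one_smul,
          hA_def, hB_def]
        abel
      rwa [← hlbσ, heq] at hmem
    obtain ⟨hA, aA, bA, hhA, haAV, haAk, hbAV, hbAk, hAeq⟩ := decomp A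
    obtain ⟨hB, aB, bB, hhB, haBV, haBk, hbBV, hbBk, hBeq⟩ := decomp B
    -- w1 := bB + i bA  vanishes
    have hw1 : bB + Complex.I • bA = 0 := by
      refine hzero _ (VC.add_mem hbBV (VC.smul_mem _ hbAV)) ?_ ?_
      · have : bB + Complex.I • bA
            = (B + Complex.I • A) - (hB + Complex.I • hA) - (aB + Complex.I • aA) := by
          rw [hAeq, hBeq]; simp only [smul_add]; abel
        rw [this]
        refine k.sub_mem (k.sub_mem hu ?_) ?_
        · exact k.add_mem (hCk hB hhB).1 (k.smul_mem _ (hCk hA hhA).1)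
        · exact k.add_mem haBk (k.smul_mem _ haAk)
      · rw [map_add, hσ_antilinear, Complex.conj_I]
        exact k.add_mem hbBk (k.smul_mem _ hbAk)
    -- w2 := aB - i aA  vanishes
    have hw2 : aB - Complex.I • aA = 0 := by
      refine hzero _ (VC.sub_mem haBV (VC.smul_mem _ haAV)) ?_ ?_
      · exact k.sub_mem haBk (k.smul_mem _ haAk)
      · have : aB - Complex.I • aA
            = (B - Complex.I • A) - (hB - Complex.I • hA) - (bB - Complex.I • bA) := by
          rw [hAeq, hBeq]; simp only [smul_add]; abel
        rw [this, map_sub, map_sub]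
        refine k.sub_mem (k.sub_mem hv ?_) ?_
        · rw [map_sub, hσ_antilinear, Complex.conj_I]
          refine k.sub_mem (hCk hB hhB).2 ?_
          rw [neg_smul]
          exact k.neg_mem (k.smul_mem _ (hCk hA hhA).2)
        · rw [map_sub, hσ_antilinear, Complex.conj_I]
          refine k.sub_mem hbBk ?_
          rw [neg_smul]
          exact k.neg_mem (k.smul_mem _ hbAk)
    -- conclude: I A + B = hB
    have hfinal : I A + B = hB + (aB - Complex.I • aA) + (bB + Complex.I • bA) := by
      rw [hAeq, hBeq, hIval hA aA bA hhA haAV haAk hbAV hbAk]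
      rw [neg_smul]; abel
    rw [hfinal, hw1, hw2, add_zero, add_zero]
    exact hhB
  -- σ commutes with I
  have hσI : ∀ z : gc, σ (I z) = I (σ z) := by
    intro z
    obtain ⟨h, a, b, hh, haV, hak, hbV, hbk, hz⟩ := decomp z
    have hσz : σ z = σ h + σ b + σ a := by rw [hz, map_add, map_add]; abel
    have h1 : I (σ z) = -Complex.I • σ b + Complex.I • σ a := by
      rw [hσz]
      exact hIval (σ h) (σ b) (σ a) (hhCσ h hh) (hVCσ b hbV) hbk (hVCσ a haV)
        (by rw [hσ_invol]; exact hak)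
    have h2 : σ (I z) = Complex.I • σ a + -Complex.I • σ b := by
      rw [hz, hIval h a b hh haV hak hbV hbk, map_add, hσ_antilinear, hσ_antilinear,
        map_neg, Complex.conj_I, neg_neg]
    rw [h1, h2]; abel
  refine ⟨main, fun x y hx hy => ⟨main x y, ?_⟩⟩
  simp only [map_add, map_sub, hσI, hlbσ, hx, hy]
end

section
/- Let A be a unital C*-algebra, p₁ ≤ ⋯ ≤ pₙ projections in A, p₀ = 0, and set h = {a ∈ A : a* = −a, a pⱼ = pⱼ a for 1 ≤ j ≤ n} inside g = {a ∈ A : a* = −a}. Define k = {b ∈ A : (p_i − p_{i−1}) b (p_j − p_{j−1}) = 0 whenever 1 ≤ j < i ≤ n}. Then, identifying g_ℂ with A via the conjugation b ↦ −b* (whose fixed points are g), k is a closed complex subalgebra of A (under the commutator bracket) satisfying k + k̄ = A and k ∩ k̄ = h_ℂ, where k̄ = {−b* : b ∈ k}. -/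
/-- The set of "block upper triangular" elements with respect to the differences
`P i − P (i−1)` of an increasing chain of projections `0 = P 0 ≤ P 1 ≤ ⋯ ≤ P n ≤ P (n+1) = 1`. -/
def flagUpper (A : Type*) [Ring A] (n : ℕ) (P : ℕ → A) : Set A :=
  {b : A | ∀ i j : ℕ, 1 ≤ j → j < i → i ≤ n + 1 →
    (P i - P (i - 1)) * b * (P j - P (j - 1)) = 0}

/-- Let `A` be a unital C*-algebra, `p₁ ≤ ⋯ ≤ pₙ` projections in `A`,
`p₀ = 0` (and `p_{n+1} = 1` handling the complement `1 − pₙ`), `g = {a : a* = −a}`,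
`h = {a ∈ g : a pⱼ = pⱼ a}`.  Identifying `g_ℂ` with `A` via the conjugation
`b ↦ −b*`, the block upper triangular set
`k = {b : (p_i − p_{i−1}) b (p_j − p_{j−1}) = 0 for j < i}` is a closed complex
subalgebra of `A` under the commutator bracket with `k + k̄ = A` and `k ∩ k̄ = h_ℂ`,
where `k̄ = {−b* : b ∈ k}` and `h_ℂ = {b : b pⱼ = pⱼ b for all j}`. -/
theorem stmt_17 {A : Type*} [NormedRing A] [StarRing A] [CStarRing A]
    [NormedAlgebra ℂ A] [StarModule ℂ A] [CompleteSpace A]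
    (n : ℕ) (P : ℕ → A)
    (hP0 : P 0 = 0) (hPtop : P (n + 1) = 1)
    (hproj : ∀ j : ℕ, j ≤ n + 1 → star (P j) = P j ∧ P j * P j = P j)
    (hmono : ∀ i j : ℕ, i ≤ j → j ≤ n + 1 → P i * P j = P i ∧ P j * P i = P i) :
    IsClosed (flagUpper A n P)
    ∧ (0 : A) ∈ flagUpper A n P
    ∧ (∀ b c : A, b ∈ flagUpper A n P → c ∈ flagUpper A n P →
        b + c ∈ flagUpper A n P)
    ∧ (∀ (z : ℂ) (b : A), b ∈ flagUpper A n P → z • b ∈ flagUpper A n P)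
    ∧ (∀ b c : A, b ∈ flagUpper A n P → c ∈ flagUpper A n P →
        b * c - c * b ∈ flagUpper A n P)
    ∧ (∀ b : A, ∃ u v : A, u ∈ flagUpper A n P ∧ v ∈ flagUpper A n P ∧
        b = u + (-(star v)))
    ∧ (∀ b : A, (b ∈ flagUpper A n P ∧ -(star b) ∈ flagUpper A n P) ↔
        ∀ j : ℕ, 1 ≤ j → j ≤ n → b * P j = P j * b) := by
  have hm1 : ∀ i j, i ≤ j → j ≤ n+1 → P i * P j = P i := fun i j h h' => (hmono i j h h').1
  have hm2 : ∀ i j, i ≤ j → j ≤ n+1 → P j * P i = P i := fun i j h h' => (hmono i j h h').2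
  have key : ∀ i j, i < j → j ≤ n+1 →
      (P i - P (i-1)) * (P j - P (j-1)) = 0 ∧ (P j - P (j-1)) * (P i - P (i-1)) = 0 := by
    intro i j hij hj
    constructor
    · rw [sub_mul, mul_sub, mul_sub, hm1 i j hij.le hj, hm1 i (j-1) (by omega) (by omega),
        hm1 (i-1) j (by omega) hj, hm1 (i-1) (j-1) (by omega) (by omega)]
      abel
    · rw [sub_mul, mul_sub, mul_sub, hm2 i j hij.le hj, hm2 (i-1) j (by omega) hj,
        hm2 i (j-1) (by omega) (by omega), hm2 (i-1) (j-1) (by omega) (by omega)]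
      abel
  have horth : ∀ i j, i ≤ n+1 → j ≤ n+1 → i ≠ j →
      (P i - P (i-1)) * (P j - P (j-1)) = 0 := by
    intro i j hi hj hne
    rcases Nat.lt_or_ge i j with h | h
    · exact (key i j h hj).1
    · exact (key j i (by omega) hi).2
  have hstarE : ∀ i, i ≤ n+1 → star (P i - P (i-1)) = P i - P (i-1) := by
    intro i hi
    rw [star_sub, (hproj i hi).1, (hproj (i-1) (by omega)).1]
  have hsum1 : ∑ k ∈ Finset.range (n+1), (P (k+1) - P k) = 1 := by
    rw [Finset.sum_range_sub (fun k => P k), hPtop, hP0, sub_zero]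
  have hmem : ∀ b : A, b ∈ flagUpper A n P ↔ ∀ i j : ℕ, 1 ≤ j → j < i → i ≤ n + 1 →
      (P i - P (i - 1)) * b * (P j - P (j - 1)) = 0 := fun b => Iff.rfl
  -- multiplicativity
  have hmul : ∀ b c : A, b ∈ flagUpper A n P → c ∈ flagUpper A n P →
      b * c ∈ flagUpper A n P := by
    intro b c hb hc
    rw [hmem] at hb hc ⊢
    intro i j h1 h2 h3
    have hbc : b * c = ∑ k ∈ Finset.range (n+1), b * (P (k+1) - P k) * c := by
      rw [← Finset.sum_mul, ← Finset.mul_sum, hsum1, mul_one]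
    rw [hbc, Finset.mul_sum, Finset.sum_mul]
    apply Finset.sum_eq_zero
    intro k hk
    rw [Finset.mem_range] at hk
    by_cases hki : k + 1 < i
    · have h0 : (P i - P (i-1)) * b * (P (k+1) - P (k+1-1)) = 0 := hb i (k+1) (by omega) hki h3
      simp only [Nat.add_sub_cancel] at h0
      simp only [← mul_assoc]
      rw [h0, zero_mul, zero_mul]
    · have h0 : (P (k+1) - P (k+1-1)) * c * (P j - P (j-1)) = 0 :=
        hc (k+1) j h1 (by omega) (by omega)
      simp only [Nat.add_sub_cancel] at h0
      simp only [mul_assoc] at h0 ⊢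
      rw [h0, mul_zero, mul_zero]
  refine ⟨?_, ?_, ?_, ?_, ?_, ?_, ?_⟩
  · -- closed
    have : flagUpper A n P = ⋂ (i : ℕ), ⋂ (j : ℕ), ⋂ (_ : 1 ≤ j), ⋂ (_ : j < i),
        ⋂ (_ : i ≤ n + 1), {b : A | (P i - P (i - 1)) * b * (P j - P (j - 1)) = 0} := by
      ext b
      simp [flagUpper]
    rw [this]
    refine isClosed_iInter fun i => isClosed_iInter fun j => isClosed_iInter fun _ =>
      isClosed_iInter fun _ => isClosed_iInter fun _ => ?_
    exact isClosed_eq (((continuous_const.mul continuous_id).mul continuous_const)) continuous_const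
  · -- zero
    intro i j h1 h2 h3
    rw [mul_zero, zero_mul]
  · -- add
    intro b c hb hc i j h1 h2 h3
    rw [mul_add, add_mul, hb i j h1 h2 h3, hc i j h1 h2 h3, add_zero]
  · -- smul
    intro z b hb i j h1 h2 h3
    rw [mul_smul_comm, smul_mul_assoc, hb i j h1 h2 h3, smul_zero]
  · -- bracket
    intro b c hb hc i j h1 h2 h3
    have expand : ∀ x y : A, (P i - P (i-1)) * (x - y) * (P j - P (j-1))
        = (P i - P (i-1)) * x * (P j - P (j-1)) - (P i - P (i-1)) * y * (P j - P (j-1)) := by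
      intro x y; noncomm_ring
    rw [expand, hmul b c hb hc i j h1 h2 h3, hmul c b hc hb i j h1 h2 h3, sub_zero]
  · -- decomposition
    intro b
    refine ⟨∑ k ∈ Finset.range (n+1), (P (k+1) - P k) * b * (1 - P k),
      -∑ k ∈ Finset.range (n+1), P k * star b * (P (k+1) - P k), ?_, ?_, ?_⟩
    · -- u ∈ k
      intro i j h1 h2 h3
      rw [Finset.mul_sum, Finset.sum_mul]
      apply Finset.sum_eq_zero
      intro k hk
      rw [Finset.mem_range] at hk
      by_cases hki : k + 1 = i
      · have h0 : (1 - P k) * (P j - P (j-1)) = 0 := by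
          rw [sub_mul, one_mul, mul_sub, hm2 j k (by omega) (by omega),
            hm2 (j-1) k (by omega) (by omega)]
          abel
        simp only [mul_assoc] at h0 ⊢
        rw [h0, mul_zero, mul_zero, mul_zero]
      · have h0 : (P i - P (i-1)) * (P (k+1) - P (k+1-1)) = 0 :=
          horth i (k+1) h3 (by omega) (fun h => hki h.symm)
        simp only [Nat.add_sub_cancel] at h0
        simp only [← mul_assoc]
        rw [h0, zero_mul, zero_mul, zero_mul]
    · -- v ∈ k
      intro i j h1 h2 h3
      rw [mul_neg, neg_mul, neg_eq_zero, Finset.mul_sum, Finset.sum_mul]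
      apply Finset.sum_eq_zero
      intro k hk
      rw [Finset.mem_range] at hk
      by_cases hkj : k + 1 = j
      · have h0 : (P i - P (i-1)) * P k = 0 := by
          rw [sub_mul, hm2 k i (by omega) h3, hm2 k (i-1) (by omega) (by omega), sub_self]
        simp only [← mul_assoc]
        rw [h0, zero_mul, zero_mul, zero_mul]
      · have h0 : (P (k+1) - P (k+1-1)) * (P j - P (j-1)) = 0 :=
          horth (k+1) j (by omega) (by omega) hkj
        simp only [Nat.add_sub_cancel] at h0
        simp only [mul_assoc] at h0 ⊢
        rw [h0, mul_zero, mul_zero, mul_zero]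
    · -- b = u + (-(star v))
      have hstv : -(star (-∑ k ∈ Finset.range (n+1), P k * star b * (P (k+1) - P k)))
          = ∑ k ∈ Finset.range (n+1), (P (k+1) - P k) * b * P k := by
        rw [star_neg, neg_neg, star_sum]
        apply Finset.sum_congr rfl
        intro k hk
        rw [Finset.mem_range] at hk
        have h1 : P (k+1) - P k = P (k+1) - P (k+1-1) := by
          simp [Nat.add_sub_cancel]
        rw [star_mul, star_mul, star_star, (hproj k (by omega)).1, h1, hstarE (k+1) (by omega),
          mul_assoc]
      rw [hstv, ← Finset.sum_add_distrib]
      have : ∀ k ∈ Finset.range (n+1),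
          (P (k+1) - P k) * b * (1 - P k) + (P (k+1) - P k) * b * P k = (P (k+1) - P k) * b := by
        intro k _
        rw [mul_sub, mul_one, sub_add_cancel]
      rw [Finset.sum_congr rfl this, ← Finset.sum_mul, hsum1, one_mul]
  · -- the intersection characterization
    intro b
    constructor
    · rintro ⟨hb, hsb⟩ j hj1 hj2
      have hz : ∀ i k, 1 ≤ i → i ≤ n+1 → 1 ≤ k → k ≤ n+1 → i ≠ k →
          (P i - P (i-1)) * b * (P k - P (k-1)) = 0 := by
        intro i k hi1 hi2 hk1 hk2 hne
        rcases Nat.lt_or_ge k i with h | h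
        · exact hb i k hk1 h hi2
        · have h' : i < k := by omega
          have h0 := hsb k i hi1 h' hk2
          rw [mul_neg, neg_mul, neg_eq_zero] at h0
          calc (P i - P (i-1)) * b * (P k - P (k-1))
              = star ((P k - P (k-1)) * star b * (P i - P (i-1))) := by
                rw [star_mul, star_mul, star_star, hstarE i (by omega), hstarE k hk2, mul_assoc]
            _ = 0 := by rw [h0, star_zero]
      have hleft : ∀ k, k ≤ n → b * (P (k+1) - P k)
          = (P (k+1) - P k) * b * (P (k+1) - P k) := by
        intro k hk
        conv_lhs => rw [← one_mul b, ← hsum1]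
        rw [Finset.sum_mul, Finset.sum_mul]
        apply Finset.sum_eq_single
        · intro i hi hne
          have := hz (i+1) (k+1) (by omega) (by rw [Finset.mem_range] at hi; omega) (by omega) (by omega)
            (by omega)
          simpa using this
        · intro h
          exact absurd (Finset.mem_range.mpr (by omega)) h
      have hright : ∀ k, k ≤ n → (P (k+1) - P k) * b
          = (P (k+1) - P k) * b * (P (k+1) - P k) := by
        intro k hk
        conv_lhs => rw [← mul_one ((P (k+1) - P k) * b), ← hsum1]
        rw [Finset.mul_sum]
        apply Finset.sum_eq_single
        · intro i hi hne
          have := hz (k+1) (i+1) (by omega) (by omega) (by omega)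
            (by rw [Finset.mem_range] at hi; omega) (by omega)
          simpa using this
        · intro h
          exact absurd (Finset.mem_range.mpr (by omega)) h
      have hPj : P j = ∑ k ∈ Finset.range j, (P (k+1) - P k) := by
        rw [Finset.sum_range_sub (fun k => P k), hP0, sub_zero]
      rw [hPj, Finset.mul_sum, Finset.sum_mul]
      apply Finset.sum_congr rfl
      intro k hk
      rw [Finset.mem_range] at hk
      rw [hleft k (by omega)]
      exact (hright k (by omega)).symm
    · intro hc
      have hc' : ∀ m, m ≤ n+1 → b * P m = P m * b ∧ star b * P m = P m * star b := by
        intro m hm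
        have hbm : b * P m = P m * b := by
          rcases Nat.eq_zero_or_pos m with h0 | h0
          · rw [h0, hP0, mul_zero, zero_mul]
          rcases eq_or_lt_of_le hm with he | hlt
          · rw [he, hPtop, mul_one, one_mul]
          · exact hc m h0 (by omega)
        refine ⟨hbm, ?_⟩
        have := congrArg star hbm
        rw [star_mul, star_mul, (hproj m hm).1] at this
        exact this.symm
      constructor
      · intro i j hj1 hij hi2
        have hbe : b * (P j - P (j-1)) = (P j - P (j-1)) * b := by
          rw [mul_sub, sub_mul, (hc' j (by omega)).1, (hc' (j-1) (by omega)).1]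
        rw [mul_assoc, hbe, ← mul_assoc, horth i j hi2 (by omega) (by omega), zero_mul]
      · intro i j hj1 hij hi2
        rw [mul_neg, neg_mul, neg_eq_zero]
        have hbe : star b * (P j - P (j-1)) = (P j - P (j-1)) * star b := by
          rw [mul_sub, sub_mul, (hc' j (by omega)).2, (hc' (j-1) (by omega)).2]
        rw [mul_assoc, hbe, ← mul_assoc, horth i j hi2 (by omega) (by omega), zero_mul]
end

section
/- Let G be a real Banach-Lie group, H a Banach-Lie subgroup, and I a bounded linear operator on g = Lie(G) with h ⊆ ker I, I(V) ⊆ V for a closed complement V of h, (I|_V)² = −id_V, and π ∘ I ∘ Ad_G(h)|_V = π ∘ Ad_G(h) ∘ I|_V for all h ∈ H (π : g → g/h the quotient map). Extend I complex-linearly to g_ℂ. Then for every h ∈ H and every v ∈ ker(I − i·id) ∩ V_ℂ, one has Ad_G(h)v ∈ h_ℂ + (ker(I − i·id) ∩ V_ℂ). In other words, the subspace k = h_ℂ + ker(I − i·id)∩V_ℂ is Ad_G(H)-invariant. -/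
/-! Split `Ad u v = a + w` along `h_ℂ ⊕ V_ℂ`. Since `I` kills `a`, the hypothesis on `Ad u v`
says `(I w - i w) - i a ∈ h_ℂ`, so `I w - i w` lies in `h_ℂ ∩ V_ℂ = 0`. -/

lemma Submodule.apply_eq_smul_of_sub_smul_mem {R M : Type*} [Ring R] [AddCommGroup M]
    [Module R M] {p q : Submodule R M} (hpq : Disjoint p q) (f : M →ₗ[R] M)
    (hfp : ∀ z ∈ p, f z = 0) (hfq : ∀ w ∈ q, f w ∈ q) (c : R) {a w : M}
    (ha : a ∈ p) (hw : w ∈ q) (h : f (a + w) - c • (a + w) ∈ p) : f w = c • w := by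
  have hsplit : f (a + w) - c • (a + w) = (f w - c • w) - c • a := by
    rw [map_add, hfp a ha, smul_add]
    abel
  have hp : f w - c • w ∈ p := by
    rw [hsplit] at h
    simpa using p.add_mem h (p.smul_mem c ha)
  have hq : f w - c • w ∈ q := q.sub_mem (hfq w hw) (q.smul_mem c hw)
  exact sub_eq_zero.mp ((Submodule.disjoint_def.mp hpq) _ hp hq)

theorem stmt_19_general {H gc : Type*}
    [NormedAddCommGroup gc] [NormedSpace ℂ gc]
    (hC VC : Submodule ℂ gc)
    (hcompl : IsCompl hC VC)
    (I : gc →L[ℂ] gc)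
    (hIh : ∀ z ∈ hC, I z = 0)
    (hIV : ∀ v ∈ VC, I v ∈ VC)
    (Ad : H → gc →L[ℂ] gc)
    (hequiv : ∀ u : H, ∀ v ∈ VC, I (Ad u v) - Ad u (I v) ∈ hC) :
    ∀ u : H, ∀ v ∈ VC, I v = Complex.I • v →
      ∃ a ∈ hC, ∃ w ∈ VC, I w = Complex.I • w ∧ Ad u v = a + w := by
  intro u v hv hIv
  obtain ⟨a, w, ha, hw, hsum⟩ :=
    Submodule.codisjoint_iff_exists_add_eq.mp hcompl.codisjoint (Ad u v)
  have hAdv : I (a + w) - Complex.I • (a + w) ∈ hC := by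
    simpa only [hIv, map_smul, hsum] using hequiv u v hv
  exact ⟨a, ha, w, hw, hC.apply_eq_smul_of_sub_smul_mem hcompl.disjoint (I : gc →ₗ[ℂ] gc)
    hIh hIV Complex.I ha hw hAdv, hsum.symm⟩

/-- Let `G` be a Banach-Lie group with Lie algebra `g`, `H` a Banach-Lie
subgroup, `I ∈ B(g)` with `h ⊆ ker I`, `I(V) ⊆ V` for a closed complement `V` of `h`,
`(I|_V)² = −id_V`, and `π∘I∘Ad(u)|_V = π∘Ad(u)∘I|_V` for all `u ∈ H`; extend
everything complex-linearly to `g_ℂ = h_ℂ ⊕ V_ℂ`.  Then for every `u ∈ H` and every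
`v ∈ ker(I − i·id) ∩ V_ℂ` one has `Ad(u)v ∈ h_ℂ + (ker(I − i·id) ∩ V_ℂ)`; that is,
`k = h_ℂ + ker(I − i·id) ∩ V_ℂ` is `Ad(H)`-invariant. -/
theorem stmt_19 {H gc : Type*} [Group H]
    [NormedAddCommGroup gc] [NormedSpace ℂ gc] [CompleteSpace gc]
    (hC VC : Submodule ℂ gc)
    (hhC_closed : IsClosed (hC : Set gc)) (hVC_closed : IsClosed (VC : Set gc))
    (hcompl : IsCompl hC VC)
    (I : gc →L[ℂ] gc)
    (hIh : ∀ z ∈ hC, I z = 0)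
    (hIV : ∀ v ∈ VC, I v ∈ VC)
    (hI2 : ∀ v ∈ VC, I (I v) = -v)
    (Ad : H → gc →L[ℂ] gc)
    (hAd_one : ∀ z : gc, Ad 1 z = z)
    (hAd_mul : ∀ u u' : H, ∀ z : gc, Ad (u * u') z = Ad u (Ad u' z))
    (hAdh : ∀ u : H, ∀ z ∈ hC, Ad u z ∈ hC)
    (hequiv : ∀ u : H, ∀ v ∈ VC, I (Ad u v) - Ad u (I v) ∈ hC) :
    ∀ u : H, ∀ v ∈ VC, I v = Complex.I • v →
      ∃ a ∈ hC, ∃ w ∈ VC, I w = Complex.I • w ∧ Ad u v = a + w :=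
  stmt_19_general hC VC hcompl I hIh hIV Ad hequiv
end
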